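/- Let X be a Banach space, H = [0, b] a compact interval, and C(H; X) the Banach space of continuous functions from H to X with the supremum norm. Let χ denote the Hausdorff measure of noncompactness on X. If A ⊆ C(H; X) is bounded and equicontinuous, then for all t ∈ H, χ(∫₀ᵗ A(s) ds) ≤ ∫₀ᵗ χ(A(s)) ds, where ∫₀ᵗ A(s) ds = {∫₀ᵗ x(s) ds : x ∈ A} ⊆ X (Bochner integrals) and A(s) = {y(s) : y ∈ A}. -/

import Mathlib

open Bornology Filter Topology

/-- The Hausdorff measure of noncompactness of a subset `B` of a metric space `Y`:
the infimum of all `ε > 0` such that `B` can be covered by finitely many balls of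
radius `ε` with centers in `Y`. -/
noncomputable def hausdorffMNC (Y : Type*) [PseudoMetricSpace Y] (B : Set Y) : ℝ :=
  sInf {ε : ℝ | 0 < ε ∧ ∃ S : Finset Y, B ⊆ ⋃ c ∈ S, Metric.ball c ε}

/-!
On a uniform partition of `[0, t]` with mesh below the equicontinuity modulus, every
integral `∫₀ᵗ x` lies within `ε t` of its left Riemann sum `∑ₖ Δ x(sₖ)`, uniformly in
`x ∈ A`. These Riemann sums lie in the Minkowski sum `∑ₖ Δ • A(sₖ)`, whose measure of
noncompactness is at most `∑ₖ Δ χ(A(sₖ))` by subadditivity and positive homogeneity of `χ`.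
Equicontinuity makes `s ↦ χ(A(s))` uniformly continuous with the same modulus, so this last
sum is in turn within `ε t` of `∫₀ᵗ χ(A(s)) ds`.
-/

open Set Metric Pointwise

section PseudoMetric

variable {Y : Type*} [PseudoMetricSpace Y]

lemma hausdorffMNC_nonneg (B : Set Y) : 0 ≤ hausdorffMNC Y B :=
  Real.sInf_nonneg fun _ hε => hε.1.le

lemma hausdorffMNC_le_of_forall_pos {B : Set Y} {M : ℝ} (hM : 0 ≤ M)
    (h : ∀ η > 0, ∃ S : Finset Y, B ⊆ ⋃ c ∈ S, ball c (M + η)) :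
    hausdorffMNC Y B ≤ M :=
  le_of_forall_pos_le_add fun η hη =>
    csInf_le ⟨0, fun _ hε => hε.1.le⟩ ⟨by linarith, h η hη⟩

lemma Bornology.IsBounded.exists_ball_cover {B : Set Y} (hB : IsBounded B) :
    ∃ ε > 0, ∃ S : Finset Y, B ⊆ ⋃ c ∈ S, ball c ε := by
  rcases B.eq_empty_or_nonempty with rfl | ⟨x, -⟩
  · exact ⟨1, one_pos, ∅, empty_subset _⟩
  · obtain ⟨r, hr, hB⟩ := hB.subset_ball_lt 0 x
    exact ⟨r, hr, {x}, by simpa using hB⟩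

lemma Bornology.IsBounded.exists_ball_cover_of_hausdorffMNC_lt {B : Set Y} (hB : IsBounded B)
    {r : ℝ} (hr : hausdorffMNC Y B < r) : ∃ S : Finset Y, B ⊆ ⋃ c ∈ S, ball c r := by
  obtain ⟨ε, ⟨-, S, hS⟩, hεr⟩ := exists_lt_of_csInf_lt hB.exists_ball_cover hr
  exact ⟨S, hS.trans (iUnion₂_mono fun c _ => ball_subset_ball hεr.le)⟩

lemma hausdorffMNC_mono {B C : Set Y} (hC : IsBounded C) (h : B ⊆ C) :
    hausdorffMNC Y B ≤ hausdorffMNC Y C :=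
  csInf_le_csInf ⟨0, fun _ hε => hε.1.le⟩ hC.exists_ball_cover
    fun _ ⟨hε, S, hS⟩ => ⟨hε, S, h.trans hS⟩

lemma hausdorffMNC_singleton (y : Y) : hausdorffMNC Y {y} = 0 :=
  le_antisymm (hausdorffMNC_le_of_forall_pos le_rfl fun η hη => ⟨{y}, by simpa using hη⟩)
    (hausdorffMNC_nonneg _)

lemma hausdorffMNC_range_le_add_of_dist_le {ι : Type*} {u v : ι → Y}
    (hv : IsBounded (range v)) {ε : ℝ} (hε : 0 ≤ ε) (h : ∀ i, dist (u i) (v i) ≤ ε) :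
    hausdorffMNC Y (range u) ≤ hausdorffMNC Y (range v) + ε := by
  refine hausdorffMNC_le_of_forall_pos (add_nonneg (hausdorffMNC_nonneg _) hε) fun η hη => ?_
  obtain ⟨S, hS⟩ := hv.exists_ball_cover_of_hausdorffMNC_lt (lt_add_of_pos_right _ hη)
  refine ⟨S, range_subset_iff.2 fun i => ?_⟩
  obtain ⟨c, hcS, hc⟩ := mem_iUnion₂.1 (hS (mem_range_self i))
  refine mem_iUnion₂.2 ⟨c, hcS, ?_⟩
  rw [mem_ball] at hc ⊢
  linarith [dist_triangle (u i) (v i) c, h i]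

lemma dist_hausdorffMNC_range_le {ι : Type*} {u v : ι → Y} (hu : IsBounded (range u))
    (hv : IsBounded (range v)) {ε : ℝ} (hε : 0 ≤ ε) (h : ∀ i, dist (u i) (v i) ≤ ε) :
    dist (hausdorffMNC Y (range u)) (hausdorffMNC Y (range v)) ≤ ε := by
  rw [Real.dist_eq, abs_sub_le_iff]
  constructor
  · linarith [hausdorffMNC_range_le_add_of_dist_le hv hε h]
  · linarith [hausdorffMNC_range_le_add_of_dist_le hu hε fun i => (dist_comm _ _).trans_le (h i)]

lemma UniformEquicontinuous.uniformContinuous_hausdorffMNC_range {ι α : Type*}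
    [PseudoMetricSpace α] {f : ι → α → Y} (hf : UniformEquicontinuous f)
    (hbdd : ∀ s, IsBounded (range fun i => f i s)) :
    UniformContinuous fun s => hausdorffMNC Y (range fun i => f i s) := by
  refine Metric.uniformContinuous_iff.2 fun ε hε => ?_
  obtain ⟨δ, hδ, hfδ⟩ := Metric.uniformEquicontinuous_iff.1 hf (ε / 2) (half_pos hε)
  exact ⟨δ, hδ, fun {u v} huv => (dist_hausdorffMNC_range_le (hbdd _) (hbdd _) (half_pos hε).le
    fun i => (hfδ u v huv i).le).trans_lt (half_lt_self hε)⟩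

end PseudoMetric

section Normed

variable {E : Type*} [SeminormedAddCommGroup E]

lemma hausdorffMNC_add_le {B C : Set E} (hB : IsBounded B) (hC : IsBounded C) :
    hausdorffMNC E (B + C) ≤ hausdorffMNC E B + hausdorffMNC E C := by
  classical
  refine hausdorffMNC_le_of_forall_pos
    (add_nonneg (hausdorffMNC_nonneg B) (hausdorffMNC_nonneg C)) fun η hη => ?_
  obtain ⟨S, hS⟩ :=
    hB.exists_ball_cover_of_hausdorffMNC_lt (lt_add_of_pos_right _ (half_pos hη))
  obtain ⟨T, hT⟩ :=
    hC.exists_ball_cover_of_hausdorffMNC_lt (lt_add_of_pos_right _ (half_pos hη))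
  refine ⟨S + T, ?_⟩
  rintro _ ⟨x, hx, y, hy, rfl⟩
  obtain ⟨c, hcS, hc⟩ := mem_iUnion₂.1 (hS hx)
  obtain ⟨d, hdT, hd⟩ := mem_iUnion₂.1 (hT hy)
  refine mem_iUnion₂.2 ⟨c + d, Finset.add_mem_add hcS hdT, ?_⟩
  rw [mem_ball] at hc hd ⊢
  linarith [dist_add_add_le x y c d]

lemma hausdorffMNC_smul_le [NormedSpace ℝ E] {B : Set E} (hB : IsBounded B) {a : ℝ}
    (ha : 0 ≤ a) :
    hausdorffMNC E (a • B) ≤ a * hausdorffMNC E B := by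
  classical
  refine hausdorffMNC_le_of_forall_pos (mul_nonneg ha (hausdorffMNC_nonneg B)) fun η hη => ?_
  -- dividing by `a + 1` rather than `a` spares the case `a = 0`
  have hη' : 0 < η / (a + 1) := by positivity
  obtain ⟨S, hS⟩ := hB.exists_ball_cover_of_hausdorffMNC_lt (lt_add_of_pos_right _ hη')
  refine ⟨a • S, ?_⟩
  rintro _ ⟨x, hx, rfl⟩
  obtain ⟨c, hcS, hc⟩ := mem_iUnion₂.1 (hS hx)
  refine mem_iUnion₂.2 ⟨a • c, Finset.smul_mem_smul_finset hcS, ?_⟩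
  rw [mem_ball] at hc ⊢
  have haη : a * (η / (a + 1)) < η := by
    rw [mul_div_assoc', div_lt_iff₀ (by linarith)]
    linarith
  calc dist (a • x) (a • c) = a * dist x c := by rw [dist_smul₀, Real.norm_of_nonneg ha]
    _ ≤ a * (hausdorffMNC E B + η / (a + 1)) := by gcongr
    _ < a * hausdorffMNC E B + η := by linarith

lemma Bornology.IsBounded.finsetSum {ι : Type*} {s : Finset ι} {C : ι → Set E}
    (h : ∀ i ∈ s, IsBounded (C i)) : IsBounded (∑ i ∈ s, C i) := by
  induction s using Finset.cons_induction with
  | empty => simp [← singleton_zero]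
  | cons i s hi ih =>
    rw [Finset.sum_cons]
    exact (h i (s.mem_cons_self i)).add (ih fun j hj => h j (Finset.mem_cons_of_mem hj))

lemma hausdorffMNC_finsetSum_le {ι : Type*} {s : Finset ι} {C : ι → Set E}
    (h : ∀ i ∈ s, IsBounded (C i)) :
    hausdorffMNC E (∑ i ∈ s, C i) ≤ ∑ i ∈ s, hausdorffMNC E (C i) := by
  induction s using Finset.cons_induction with
  | empty => simp [← singleton_zero, hausdorffMNC_singleton]
  | cons i s hi ih =>
    have hs : ∀ j ∈ s, IsBounded (C j) := fun j hj => h j (Finset.mem_cons_of_mem hj)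
    rw [Finset.sum_cons, Finset.sum_cons]
    exact (hausdorffMNC_add_le (h i (s.mem_cons_self i)) (IsBounded.finsetSum hs)).trans
      (add_le_add_right (ih hs) _)

end Normed

section RiemannSum

open MeasureTheory intervalIntegral Interval

variable {E : Type*} [NormedAddCommGroup E] [NormedSpace ℝ E]

noncomputable def leftRiemannSum (F : ℝ → E) (t : ℝ) (n : ℕ) : E :=
  ∑ k ∈ Finset.range n, (t / n) • F (k * (t / n))

lemma norm_integral_sub_smul_le [CompleteSpace E] {F : ℝ → E} {a b ε : ℝ} {c : E}
    (hF : IntervalIntegrable F volume a b) (h : ∀ s ∈ Ι a b, ‖F s - c‖ ≤ ε) :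
    ‖(∫ s in a..b, F s) - (b - a) • c‖ ≤ ε * |b - a| := by
  rw [← intervalIntegral.integral_const, ← integral_sub hF intervalIntegrable_const]
  exact norm_integral_le_of_norm_le_const h

lemma norm_integral_sub_leftRiemannSum_le [CompleteSpace E] {F : ℝ → E} (hF : Continuous F)
    {t ε : ℝ} {n : ℕ} (hn : n ≠ 0)
    (h : ∀ u v, |u - v| ≤ |t| / n → dist (F u) (F v) ≤ ε) :
    ‖(∫ s in (0 : ℝ)..t, F s) - leftRiemannSum F t n‖ ≤ ε * |t| := by
  set a : ℕ → ℝ := fun k => k * (t / n)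
  have hstep : ∀ k, a (k + 1) - a k = t / n := fun k => by simp only [a]; push_cast; ring
  have hsplit :
      ∫ s in (0 : ℝ)..t, F s = ∑ k ∈ Finset.range n, ∫ s in a k..a (k + 1), F s := by
    rw [sum_integral_adjacent_intervals fun k _ => hF.intervalIntegrable _ _]
    simp [a, mul_div_cancel₀ t (Nat.cast_ne_zero.2 hn)]
  have hpiece : ∀ k, ‖(∫ s in a k..a (k + 1), F s) - (t / n) • F (a k)‖ ≤
      ε * (|t| / n) := fun k => by
    have hnear : ∀ s ∈ Ι (a k) (a (k + 1)), ‖F s - F (a k)‖ ≤ ε := fun s hs => by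
      rw [← dist_eq_norm]
      refine h s (a k) ?_
      simpa [hstep, abs_div] using abs_sub_left_of_mem_uIcc (uIoc_subset_uIcc hs)
    simpa [hstep, abs_div] using norm_integral_sub_smul_le (hF.intervalIntegrable _ _) hnear
  calc ‖(∫ s in (0 : ℝ)..t, F s) - leftRiemannSum F t n‖
      = ‖∑ k ∈ Finset.range n, ((∫ s in a k..a (k + 1), F s) - (t / n) • F (a k))‖ := by
        rw [hsplit, leftRiemannSum, Finset.sum_sub_distrib]
    _ ≤ ∑ k ∈ Finset.range n, ε * (|t| / n) := norm_sum_le_of_le _ fun k _ => hpiece k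
    _ = ε * |t| := by
        rw [Finset.sum_const, Finset.card_range, nsmul_eq_mul]
        field_simp

end RiemannSum

section IntegralMNC

variable {E : Type*} [NormedAddCommGroup E] [NormedSpace ℝ E] {ι : Type*} {f : ι → ℝ → E}

lemma range_leftRiemannSum_subset (t : ℝ) (n : ℕ) :
    (range fun i => leftRiemannSum (f i) t n) ⊆
      ∑ k ∈ Finset.range n, (t / n) • range fun i => f i (k * (t / n)) :=
  range_subset_iff.2 fun i => finsetSum_mem_finsetSum _ _ _ fun _ _ =>
    smul_mem_smul_set (mem_range_self i)

lemma isBounded_range_leftRiemannSum (hbdd : ∀ s, IsBounded (range fun i => f i s))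
    (t : ℝ) (n : ℕ) : IsBounded (range fun i => leftRiemannSum (f i) t n) :=
  (IsBounded.finsetSum fun _ _ => (hbdd _).smul₀ _).subset (range_leftRiemannSum_subset t n)

lemma hausdorffMNC_range_leftRiemannSum_le (hbdd : ∀ s, IsBounded (range fun i => f i s))
    {t : ℝ} (ht : 0 ≤ t) (n : ℕ) :
    hausdorffMNC E (range fun i => leftRiemannSum (f i) t n) ≤
      leftRiemannSum (fun s => hausdorffMNC E (range fun i => f i s)) t n :=
  calc hausdorffMNC E (range fun i => leftRiemannSum (f i) t n)
      ≤ hausdorffMNC E (∑ k ∈ Finset.range n, (t / n) • range fun i => f i (k * (t / n))) :=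
        hausdorffMNC_mono (IsBounded.finsetSum fun _ _ => (hbdd _).smul₀ _)
          (range_leftRiemannSum_subset t n)
    _ ≤ ∑ k ∈ Finset.range n, hausdorffMNC E ((t / n) • range fun i => f i (k * (t / n))) :=
        hausdorffMNC_finsetSum_le fun _ _ => (hbdd _).smul₀ _
    _ ≤ _ := Finset.sum_le_sum fun _ _ => hausdorffMNC_smul_le (hbdd _) (by positivity)

theorem hausdorffMNC_range_integral_le [CompleteSpace E] (hf : UniformEquicontinuous f)
    (hbdd : ∀ s, IsBounded (range fun i => f i s)) {t : ℝ} (ht : 0 ≤ t) :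
    hausdorffMNC E (range fun i => ∫ s in (0 : ℝ)..t, f i s) ≤
      ∫ s in (0 : ℝ)..t, hausdorffMNC E (range fun i => f i s) := by
  set g := fun s => hausdorffMNC E (range fun i => f i s)
  refine le_of_forall_pos_le_add fun ε hε => ?_
  set ε' := ε / (2 * (t + 1)) with hε'_def
  have hε' : 0 < ε' := by positivity
  have h2ε' : 2 * ε' * |t| ≤ ε := by
    rw [abs_of_nonneg ht, hε'_def]
    field_simp
    linarith
  obtain ⟨δ, hδ, hfδ⟩ := Metric.uniformEquicontinuous_iff.1 hf ε' hε'
  obtain ⟨n, hn⟩ := exists_nat_gt (|t| / δ)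
  have hn0 : (0 : ℝ) < n := (div_nonneg (abs_nonneg t) hδ.le).trans_lt hn
  have hmesh : ∀ u v : ℝ, |u - v| ≤ |t| / n → ∀ i, dist (f i u) (f i v) ≤ ε' :=
    fun u v huv i => (hfδ u v (huv.trans_lt ((div_lt_comm₀ hδ hn0).1 hn)) i).le
  have hg_riemann := norm_integral_sub_leftRiemannSum_le
    (hf.uniformContinuous_hausdorffMNC_range hbdd).continuous (Nat.cast_ne_zero.1 hn0.ne')
    fun u v huv => dist_hausdorffMNC_range_le (hbdd u) (hbdd v) hε'.le (hmesh u v huv)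
  rw [Real.norm_eq_abs] at hg_riemann
  calc hausdorffMNC E (range fun i => ∫ s in (0 : ℝ)..t, f i s)
      ≤ hausdorffMNC E (range fun i => leftRiemannSum (f i) t n) + ε' * |t| := by
        refine hausdorffMNC_range_le_add_of_dist_le (isBounded_range_leftRiemannSum hbdd t n)
          (by positivity) fun i => ?_
        rw [dist_eq_norm]
        exact norm_integral_sub_leftRiemannSum_le (hf.uniformContinuous i).continuous
          (Nat.cast_ne_zero.1 hn0.ne') fun u v huv => hmesh u v huv i
    _ ≤ leftRiemannSum g t n + ε' * |t| := by
        gcongr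
        exact hausdorffMNC_range_leftRiemannSum_le hbdd ht n
    _ ≤ (∫ s in (0 : ℝ)..t, g s) + ε := by linarith [(abs_le.1 hg_riemann).1]

end IntegralMNC

/-- If `A ⊆ C([0,b]; X)` is bounded and equicontinuous, then for all `t ∈ [0,b]`,
`χ (∫₀ᵗ A(s) ds) ≤ ∫₀ᵗ χ (A s) ds`, where `∫₀ᵗ A(s) ds = {∫₀ᵗ x(s) ds : x ∈ A}`.
(Functions on `[0,b]` are integrated over `[0,t]` via the retraction `projIcc`.) -/
theorem hausdorffMNC_integral_le
    {X : Type*} [NormedAddCommGroup X] [NormedSpace ℝ X] [CompleteSpace X]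
    {b : ℝ} (hb : 0 < b)
    (A : Set C(Set.Icc (0:ℝ) b, X)) (hA : IsBounded A)
    (hequi : ∀ ε > (0:ℝ), ∃ δ > (0:ℝ), ∀ y ∈ A, ∀ t s : Set.Icc (0:ℝ) b,
      |(t : ℝ) - (s : ℝ)| < δ → ‖y t - y s‖ < ε) :
    ∀ t ∈ Set.Icc (0:ℝ) b,
      hausdorffMNC X
          ((fun x : C(Set.Icc (0:ℝ) b, X) =>
            ∫ s in (0:ℝ)..t, x (Set.projIcc 0 b hb.le s)) '' A) ≤
        ∫ s in (0:ℝ)..t,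
          hausdorffMNC X ((fun y : C(Set.Icc (0:ℝ) b, X) =>
            y (Set.projIcc 0 b hb.le s)) '' A) := by
  intro t ht
  have hf : UniformEquicontinuous
      fun (y : A) (s : ℝ) => (y : C(Icc 0 b, X)) (projIcc 0 b hb.le s) := by
    refine Metric.uniformEquicontinuous_iff.2 fun ε hε => ?_
    obtain ⟨δ, hδ, hyδ⟩ := hequi ε hε
    refine ⟨δ, hδ, fun u v huv y => ?_⟩
    rw [dist_eq_norm]
    exact hyδ y y.2 _ _ ((abs_projIcc_sub_projIcc hb.le).trans_lt huv)
  have hbdd : ∀ s, IsBounded (range fun y : A => (y : C(Icc 0 b, X)) (projIcc 0 b hb.le s)) :=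
    fun s => ((ContinuousMap.evalCLM ℝ (projIcc 0 b hb.le s)).lipschitz.isBounded_image hA).subset
      (range_subset_iff.2 fun y => mem_image_of_mem _ y.2)
  simpa only [image_eq_range] using hausdorffMNC_range_integral_le hf hbdd ht.1
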